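/- arXiv:2202.04295 — 6 statements merged into one kernel-verified Lean document; each statement's English description precedes it below -/
import Mathlib

section
/- Let {Y_t} be a sequence of nonnegative real numbers, {c_t} a sequence of nonnegative real numbers with ∑ c_t < ∞, and {Z_t} a sequence of nonnegative real numbers with ∑ Z_t < ∞. If Y_{t+1} ≤ (1 + c_t)·Y_t + Z_t for all t ≥ 1, then the sequence {Y_t} converges. -/
open Filter

theorem deterministic_robbins_siegmund_no_X
    (Y c Z : ℕ → ℝ)
    (hY : ∀ t, 0 ≤ Y t) (hc : ∀ t, 0 ≤ c t) (hZ : ∀ t, 0 ≤ Z t)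
    (hcsum : Summable c) (hZsum : Summable Z)
    (hrec : ∀ t, 1 ≤ t → Y (t + 1) ≤ (1 + c t) * Y t + Z t) :
    ∃ l : ℝ, Tendsto Y atTop (nhds l) := by
  set A : ℕ → ℝ := fun t => ∏ s ∈ Finset.Ico 1 t, (1 + c s) with hA
  have hA1 : ∀ t, 1 ≤ A t := by
    intro t
    simp only [hA]
    calc (1:ℝ) = ∏ s ∈ Finset.Ico 1 t, 1 := by simp
      _ ≤ ∏ s ∈ Finset.Ico 1 t, (1 + c s) :=
        Finset.prod_le_prod (fun s _ => zero_le_one) (fun s _ => by linarith [hc s])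
  have hApos : ∀ t, 0 < A t := fun t => lt_of_lt_of_le one_pos (hA1 t)
  have hAsucc : ∀ t, 1 ≤ t → A (t + 1) = A t * (1 + c t) := by
    intro t ht
    simp only [hA]
    rw [Finset.prod_Ico_succ_top ht]
  have hAmono : Monotone A := by
    apply monotone_nat_of_le_succ
    intro n
    rcases Nat.eq_zero_or_pos n with h | h
    · subst h; simp [hA]
    · rw [hAsucc n h]
      nlinarith [hApos n, hc n]
  have hAbdd : BddAbove (Set.range A) := by
    refine ⟨Real.exp (∑' s, c s), ?_⟩
    rintro x ⟨t, rfl⟩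
    simp only [hA]
    calc (∏ s ∈ Finset.Ico 1 t, (1 + c s)) ≤ ∏ s ∈ Finset.Ico 1 t, Real.exp (c s) :=
          Finset.prod_le_prod (fun s _ => by linarith [hc s])
            (fun s _ => by linarith [Real.add_one_le_exp (c s)])
      _ = Real.exp (∑ s ∈ Finset.Ico 1 t, c s) := by
          rw [Real.exp_sum]
      _ ≤ Real.exp (∑' s, c s) := by
          apply Real.exp_le_exp.2
          exact Summable.sum_le_tsum _ (fun s _ => hc s) hcsum
  obtain ⟨L, hL⟩ : ∃ L, Tendsto A atTop (nhds L) := ⟨_, tendsto_atTop_ciSup hAmono hAbdd⟩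
  have hL1 : 1 ≤ L := le_of_tendsto_of_tendsto tendsto_const_nhds hL
    (Eventually.of_forall hA1)
  -- U t = Y t / A t
  set U : ℕ → ℝ := fun t => Y t / A t with hU
  have hUnn : ∀ t, 0 ≤ U t := fun t => div_nonneg (hY t) (hApos t).le
  have hUrec : ∀ t, 1 ≤ t → U (t + 1) ≤ U t + Z t := by
    intro t ht
    have h1 : Y (t + 1) / A (t + 1) ≤ ((1 + c t) * Y t + Z t) / A (t + 1) :=
      div_le_div_of_nonneg_right (hrec t ht) (hApos (t + 1)).le
    have h2 : ((1 + c t) * Y t + Z t) / A (t + 1) =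
        Y t / A t + Z t / A (t + 1) := by
      have h0 : A t ≠ 0 := (hApos t).ne'
      have h0' : (1 : ℝ) + c t ≠ 0 := by linarith [hc t]
      rw [hAsucc t ht]
      field_simp
    have h3 : Z t / A (t + 1) ≤ Z t :=
      div_le_self (hZ t) (hA1 (t + 1))
    calc U (t + 1) ≤ Y t / A t + Z t / A (t + 1) := by rw [← h2]; exact h1
      _ ≤ U t + Z t := add_le_add le_rfl h3
  -- tail sums
  set R : ℕ → ℝ := fun t => ∑' k, Z (k + t) with hR
  have hRsummable : ∀ t, Summable (fun k => Z (k + t)) := fun t =>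
    (summable_nat_add_iff t).2 hZsum
  have hRnn : ∀ t, 0 ≤ R t := fun t => tsum_nonneg (fun k => hZ _)
  have hRrec : ∀ t, R t = Z t + R (t + 1) := by
    intro t
    have := Summable.tsum_eq_zero_add (hRsummable t)
    simpa [hR, Nat.add_right_comm, ← Nat.add_assoc] using this
  have hRzero : Tendsto R atTop (nhds 0) := tendsto_sum_nat_add Z
  set V : ℕ → ℝ := fun t => U t + R t with hV
  have hVanti : ∀ t, 1 ≤ t → V (t + 1) ≤ V t := by
    intro t ht
    have := hUrec t ht
    have hr := hRrec t
    simp only [hV]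
    linarith
  set W : ℕ → ℝ := fun n => V (n + 1) with hW
  have hWanti : Antitone W := by
    apply antitone_nat_of_succ_le
    intro n
    exact hVanti (n + 1) (Nat.le_add_left 1 n)
  have hWbdd : BddBelow (Set.range W) := by
    refine ⟨0, ?_⟩
    rintro x ⟨n, rfl⟩
    exact add_nonneg (hUnn _) (hRnn _)
  obtain ⟨m, hm⟩ : ∃ m, Tendsto W atTop (nhds m) := ⟨_, tendsto_atTop_ciInf hWanti hWbdd⟩
  have hVlim : Tendsto V atTop (nhds m) := by
    rwa [← tendsto_add_atTop_iff_nat 1]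
  have hUlim : Tendsto U atTop (nhds m) := by
    have : Tendsto (fun t => V t - R t) atTop (nhds (m - 0)) := hVlim.sub hRzero
    simpa [hV] using this
  refine ⟨m * L, ?_⟩
  have : Tendsto (fun t => U t * A t) atTop (nhds (m * L)) := hUlim.mul hL
  refine this.congr (fun t => ?_)
  simp only [hU]
  exact div_mul_cancel₀ (Y t) (hApos t).ne'
end

section
/- Let {Y_t} be a sequence of nonnegative real numbers satisfying Y_{t+1} ≤ (1 − c_1·α_t)·Y_t + c_2·α_t² for all t ≥ 1, where c_1, c_2 > 0 and α_t = η/t^{1−θ} for some η > 0 and θ ∈ (0, 1/2), with c_1·α_t ≤ 1 for all t. Then for any ε ∈ (2θ, 1), t^{1−ε}·Y_t → 0 as t → ∞; that is, Y_t = o(1/t^{1−ε}). -/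
open Filter

private lemma rpow_diff_aux (p x : ℝ) (hp0 : 0 ≤ p) (hp1 : p ≤ 1) (hx : 1 ≤ x) :
    x ^ (-p) - (x + 1) ^ (-p) ≤ p * x ^ (-p - 1) := by
  have hx0 : (0:ℝ) < x := by linarith
  have hx10 : (0:ℝ) < x + 1 := by linarith
  have hb : (1 + 1/x) ^ p ≤ 1 + p * (1/x) :=
    rpow_one_add_le_one_add_mul_self (le_trans (by norm_num : (-1:ℝ) ≤ 0) (by positivity)) hp0 hp1
  have hxp : (0:ℝ) < x ^ p := Real.rpow_pos_of_pos hx0 p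
  have hx1p : (0:ℝ) < (x + 1) ^ p := Real.rpow_pos_of_pos hx10 p
  have h2 : (x + 1) ^ p ≤ x ^ p * (1 + p / x) := by
    have hxe : x + 1 = x * (1 + 1/x) := by field_simp
    rw [hxe, Real.mul_rpow hx0.le (by positivity)]
    have := mul_le_mul_of_nonneg_left hb hxp.le
    calc x ^ p * (1 + 1/x) ^ p ≤ x ^ p * (1 + p * (1/x)) := this
      _ = x ^ p * (1 + p / x) := by ring
  -- main inequality: (x - p) * (x+1)^p ≤ x * x^p
  have hmain : (x - p) * (x + 1) ^ p ≤ x * x ^ p := by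
    rcases le_or_gt (x - p) 0 with h | h
    · nlinarith
    · have := mul_le_mul_of_nonneg_left h2 h.le
      have hxne : x ≠ 0 := hx0.ne'
      calc (x - p) * (x + 1) ^ p ≤ (x - p) * (x ^ p * (1 + p / x)) := this
        _ = x * x ^ p * (1 - (p/x)^2) := by field_simp; ring
        _ ≤ x * x ^ p := by nlinarith [sq_nonneg (p/x), mul_pos hx0 hxp]
  have e1 : x ^ (-p) = (x ^ p)⁻¹ := Real.rpow_neg hx0.le p
  have e2 : (x + 1) ^ (-p) = ((x + 1) ^ p)⁻¹ := Real.rpow_neg hx10.le p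
  have e3 : x ^ (-p - 1) = (x ^ p * x)⁻¹ := by
    rw [show (-p - 1 : ℝ) = -(p + 1) by ring, Real.rpow_neg hx0.le,
      Real.rpow_add hx0, Real.rpow_one]
  rw [e1, e2, e3]
  rw [inv_eq_one_div, inv_eq_one_div, inv_eq_one_div, div_sub_div _ _ hxp.ne' hx1p.ne',
    mul_one_div, div_le_div_iff₀ (by positivity) (by positivity)]
  nlinarith [hxp, hx1p, hx0]

theorem strong_rate_lemma
    (Y α : ℕ → ℝ) (c₁ c₂ η θ : ℝ)
    (hY : ∀ t, 0 ≤ Y t) (hc₁ : 0 < c₁) (hc₂ : 0 < c₂) (hη : 0 < η)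
    (hθ0 : 0 < θ) (hθ1 : θ < 1 / 2)
    (hα : ∀ t : ℕ, 1 ≤ t → α t = η / (t : ℝ) ^ (1 - θ))
    (hαsmall : ∀ t : ℕ, 1 ≤ t → c₁ * α t ≤ 1)
    (hrec : ∀ t : ℕ, 1 ≤ t → Y (t + 1) ≤ (1 - c₁ * α t) * Y t + c₂ * (α t) ^ 2) :
    ∀ ε : ℝ, 2 * θ < ε → ε < 1 →
      Tendsto (fun t : ℕ => (t : ℝ) ^ (1 - ε) * Y t) atTop (nhds 0) := by
  intro ε hε1 hε2
  -- Step A: find T with c₁ η t^θ ≥ 2 for t ≥ T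
  have htend : Tendsto (fun t : ℕ => c₁ * η * (t : ℝ) ^ θ) atTop atTop := by
    apply Tendsto.const_mul_atTop (by positivity : (0:ℝ) < c₁ * η)
    exact (tendsto_rpow_atTop hθ0).comp tendsto_natCast_atTop_atTop
  obtain ⟨T₀, hT₀⟩ := eventually_atTop.1 (htend.eventually_ge_atTop 2)
  set T : ℕ := max T₀ 1 with hTdef
  have hT1 : 1 ≤ T := le_max_right _ _
  have hTge : ∀ t : ℕ, T ≤ t → 2 ≤ c₁ * η * (t : ℝ) ^ θ := fun t ht =>
    hT₀ t (le_trans (le_max_left _ _) ht)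
  set C : ℝ := max (c₂ * η ^ 2) (Y T * (T : ℝ) ^ (1 - 2 * θ)) with hCdef
  have hC1 : c₂ * η ^ 2 ≤ C := le_max_left _ _
  have hC0 : 0 ≤ C := le_trans (by positivity) hC1
  -- Step C: Y t ≤ C * t^(2θ - 1) for all t ≥ T
  have hbound : ∀ t : ℕ, T ≤ t → Y t ≤ C * (t : ℝ) ^ (2 * θ - 1) := by
    intro t ht
    induction t, ht using Nat.le_induction with
    | base =>
      have hT0 : (0:ℝ) < T := by exact_mod_cast hT1
      have : Y T * (T : ℝ) ^ (1 - 2 * θ) ≤ C := le_max_right _ _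
      have h2 := mul_le_mul_of_nonneg_right this
        (Real.rpow_nonneg hT0.le (2 * θ - 1))
      calc Y T = Y T * (T : ℝ) ^ (1 - 2*θ) * (T : ℝ) ^ (2*θ - 1) := by
            rw [mul_assoc, ← Real.rpow_add hT0]
            norm_num
        _ ≤ C * (T : ℝ) ^ (2 * θ - 1) := h2
    | succ t ht IH =>
      have ht1 : 1 ≤ t := le_trans hT1 ht
      have htR : (1:ℝ) ≤ (t : ℝ) := by exact_mod_cast ht1
      have ht0 : (0:ℝ) < (t : ℝ) := by linarith
      have hαt : α t = η * (t : ℝ) ^ (θ - 1) := by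
        rw [hα t ht1, show (θ - 1 : ℝ) = -(1 - θ) by ring, Real.rpow_neg ht0.le,
          div_eq_mul_inv]
      have hαpos : 0 < α t := by
        rw [hαt]; positivity
      have hcoef : 0 ≤ 1 - c₁ * α t := by linarith [hαsmall t ht1]
      have h1 := hrec t ht1
      have h2 : (1 - c₁ * α t) * Y t ≤ (1 - c₁ * α t) * (C * (t : ℝ) ^ (2*θ - 1)) :=
        mul_le_mul_of_nonneg_left IH hcoef
      have hα2 : α t ^ 2 = η ^ 2 * (t : ℝ) ^ (2*θ - 2) := by
        rw [hαt, mul_pow, pow_two ((t:ℝ) ^ (θ - 1)), ← Real.rpow_add ht0,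
          show (θ - 1) + (θ - 1) = 2*θ - 2 by ring]
      -- key: t^(2θ-1) - (t+1)^(2θ-1) ≤ (1-2θ) t^(2θ-2)
      have hkey := rpow_diff_aux (1 - 2*θ) (t : ℝ) (by linarith) (by linarith) htR
      rw [show (-(1 - 2*θ) : ℝ) = 2*θ - 1 by ring] at hkey
      rw [show (2*θ - 1 - 1 : ℝ) = 2*θ - 2 by ring] at hkey
      have hcast : ((t + 1 : ℕ) : ℝ) = (t : ℝ) + 1 := by push_cast; ring
      -- sufficient decrease
      have hmul : (t : ℝ) ^ (θ - 1) * (t : ℝ) ^ (2*θ - 1) = (t : ℝ) ^ θ * (t : ℝ) ^ (2*θ - 2) := by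
        rw [← Real.rpow_add ht0, ← Real.rpow_add ht0]
        ring_nf
      have htθ : 2 ≤ c₁ * η * (t : ℝ) ^ θ := hTge t ht
      have hpow2 : (0:ℝ) ≤ (t : ℝ) ^ (2*θ - 2) := Real.rpow_nonneg ht0.le _
      have hsuff : C * (1 - 2*θ) * (t : ℝ) ^ (2*θ - 2) + c₂ * η ^ 2 * (t : ℝ) ^ (2*θ - 2)
          ≤ c₁ * η * C * ((t : ℝ) ^ θ * (t : ℝ) ^ (2*θ - 2)) := by
        have h3 : C * (1 - 2*θ) + c₂ * η ^ 2 ≤ C * (c₁ * η * (t : ℝ) ^ θ) := by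
          nlinarith
        calc C * (1 - 2*θ) * (t : ℝ) ^ (2*θ - 2) + c₂ * η ^ 2 * (t : ℝ) ^ (2*θ - 2)
            = (C * (1 - 2*θ) + c₂ * η ^ 2) * (t : ℝ) ^ (2*θ - 2) := by ring
          _ ≤ C * (c₁ * η * (t : ℝ) ^ θ) * (t : ℝ) ^ (2*θ - 2) :=
              mul_le_mul_of_nonneg_right h3 hpow2
          _ = c₁ * η * C * ((t : ℝ) ^ θ * (t : ℝ) ^ (2*θ - 2)) := by ring
      rw [hcast]
      calc Y (t + 1) ≤ (1 - c₁ * α t) * Y t + c₂ * α t ^ 2 := h1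
        _ ≤ (1 - c₁ * α t) * (C * (t : ℝ) ^ (2*θ - 1)) + c₂ * α t ^ 2 := by linarith
        _ = C * (t : ℝ) ^ (2*θ - 1)
            - c₁ * η * C * ((t : ℝ) ^ (θ - 1) * (t : ℝ) ^ (2*θ - 1))
            + c₂ * η ^ 2 * (t : ℝ) ^ (2*θ - 2) := by rw [hα2, hαt]; ring
        _ = C * (t : ℝ) ^ (2*θ - 1)
            - c₁ * η * C * ((t : ℝ) ^ θ * (t : ℝ) ^ (2*θ - 2))
            + c₂ * η ^ 2 * (t : ℝ) ^ (2*θ - 2) := by rw [hmul]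
        _ ≤ C * ((t : ℝ) + 1) ^ (2*θ - 1) := by nlinarith [hkey, hC0]
  -- Step D: squeeze
  have hg : Tendsto (fun t : ℕ => C * (t : ℝ) ^ (2*θ - ε)) atTop (nhds 0) := by
    have h0 : Tendsto (fun x : ℝ => x ^ (-(ε - 2*θ))) atTop (nhds 0) :=
      tendsto_rpow_neg_atTop (by linarith)
    have := (h0.comp tendsto_natCast_atTop_atTop).const_mul C
    simpa [show (-(ε - 2*θ) : ℝ) = 2*θ - ε by ring, Function.comp] using this
  apply squeeze_zero' (g := fun t : ℕ => C * (t : ℝ) ^ (2*θ - ε)) ?_ ?_ hg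
  · exact Eventually.of_forall fun t =>
      mul_nonneg (Real.rpow_nonneg (Nat.cast_nonneg t) _) (hY t)
  · filter_upwards [eventually_ge_atTop T] with t ht
    have ht1 : 1 ≤ t := le_trans hT1 ht
    have ht0 : (0:ℝ) < (t : ℝ) := by exact_mod_cast ht1
    have hb := hbound t ht
    have h2 : (t : ℝ) ^ (1 - ε) * Y t ≤ (t : ℝ) ^ (1 - ε) * (C * (t : ℝ) ^ (2*θ - 1)) :=
      mul_le_mul_of_nonneg_left hb (Real.rpow_nonneg ht0.le _)
    calc (t : ℝ) ^ (1 - ε) * Y t ≤ (t : ℝ) ^ (1 - ε) * (C * (t : ℝ) ^ (2*θ - 1)) := h2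
      _ = C * (t : ℝ) ^ (2*θ - ε) := by
          rw [mul_comm, mul_assoc, ← Real.rpow_add ht0]
          ring_nf
end

section
/- Let {X_t} be a sequence of nonnegative reals and {α_t} a decreasing sequence of positive reals with ∑_{t} α_t·X_t < ∞ and ∑_{t} α_t / (∑_{i=1}^{t-1} α_i) = ∞. Define w_t = 2α_t/(∑_{i=1}^t α_i), Y_1 = X_1, and Y_{t+1} = (1−w_t)·Y_t + w_t·X_t. Then Y_t·(∑_{i=1}^{t-1} α_i) → 0 as t → ∞. -/
open Filter Finset

private lemma aux_tendsto_zero (S β c : ℕ → ℝ)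
    (hS : ∀ n, 0 ≤ S n) (hβ0 : ∀ n, 0 ≤ β n)
    (hc : ∀ n, 0 ≤ c n)
    (hrec : ∀ n, S (n + 1) ≤ (1 - β n) * S n + c n)
    (hcs : Summable c) (hβd : ¬ Summable β) :
    Tendsto S atTop (nhds 0) := by
  -- tail sums of c
  set R : ℕ → ℝ := fun n => ∑' k, c (k + n) with hRdef
  have hRsum : ∀ n, Summable (fun k => c (k + n)) := fun n => (summable_nat_add_iff n).2 hcs
  have hRnn : ∀ n, 0 ≤ R n := fun n => tsum_nonneg (fun k => hc _)
  have hReq : ∀ n, (∑ i ∈ Finset.range n, c i) + R n = ∑' i, c i := fun n =>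
    Summable.sum_add_tsum_nat_add n hcs
  have hR0 : Tendsto R atTop (nhds 0) := by
    have h1 : Tendsto (fun n => ∑ i ∈ Finset.range n, c i) atTop (nhds (∑' i, c i)) :=
      hcs.hasSum.tendsto_sum_nat
    have h2 : Tendsto (fun n => (∑' i, c i) - ∑ i ∈ Finset.range n, c i) atTop
        (nhds ((∑' i, c i) - ∑' i, c i)) := tendsto_const_nhds.sub h1
    simp only [sub_self] at h2
    have : R = fun n => (∑' i, c i) - ∑ i ∈ Finset.range n, c i := by
      funext n; have := hReq n; linarith
    rw [this]; exact h2
  have hRstep : ∀ n, R n = c n + R (n + 1) := by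
    intro n
    have h1 := hReq n
    have h2 := hReq (n + 1)
    rw [Finset.sum_range_succ] at h2
    linarith
  -- T = S + R is antitone and nonneg
  set T : ℕ → ℝ := fun n => S n + R n with hTdef
  have hTanti : Antitone T := by
    apply antitone_nat_of_succ_le
    intro n
    have h1 := hrec n
    have h2 := hRstep n
    have h3 : (1 - β n) * S n ≤ S n := by nlinarith [mul_nonneg (hβ0 n) (hS n)]
    simp only [hTdef]
    linarith
  have hTnn : ∀ n, 0 ≤ T n := fun n => add_nonneg (hS n) (hRnn n)
  have hbdd : BddBelow (Set.range T) := ⟨0, by rintro x ⟨n, rfl⟩; exact hTnn n⟩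
  have hTlim : Tendsto T atTop (nhds (⨅ n, T n)) := tendsto_atTop_ciInf hTanti hbdd
  set L : ℝ := ⨅ n, T n with hLdef
  have hSlim : Tendsto S atTop (nhds L) := by
    have : Tendsto (fun n => T n - R n) atTop (nhds (L - 0)) := hTlim.sub hR0
    simp only [sub_zero] at this
    convert this using 1
    funext n; simp [hTdef]
  have hLnn : 0 ≤ L :=
    le_of_tendsto_of_tendsto' tendsto_const_nhds hSlim (fun n => hS n)
  rcases eq_or_lt_of_le hLnn with hL0 | hLpos
  · rwa [← hL0] at hSlim
  · -- derive contradiction: β would be summable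
    exfalso
    have hev : ∀ᶠ n in atTop, L / 2 ≤ S n :=
      hSlim.eventually (eventually_ge_nhds (by linarith))
    obtain ⟨N, hN⟩ := hev.exists_forall_of_atTop
    -- telescoping bound
    have key : ∀ n, ∑ i ∈ Finset.range n, β (i + N) * (L / 2) ≤
        S N - S (N + n) + ∑ i ∈ Finset.range n, c (i + N) := by
      intro n
      induction n with
      | zero => simp
      | succ m ih =>
        rw [Finset.sum_range_succ, Finset.sum_range_succ]
        have h1 := hrec (N + m)
        have h2 : L / 2 ≤ S (N + m) := hN (N + m) (Nat.le_add_right _ _)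
        have h3 : β (m + N) * (L / 2) ≤ β (m + N) * S (N + m) := by
          apply mul_le_mul_of_nonneg_left h2 (hβ0 _)
        have h4 : β (m + N) * S (N + m) ≤ S (N + m) - S (N + m + 1) + c (N + m) := by
          have : (1 - β (N + m)) * S (N + m) = S (N + m) - β (N + m) * S (N + m) := by ring
          rw [this] at h1
          have : β (N + m) = β (m + N) := by rw [Nat.add_comm]
          rw [this] at h1
          linarith
        have h5 : c (N + m) = c (m + N) := by rw [Nat.add_comm]
        have h6 : N + (m + 1) = N + m + 1 := by omega
        rw [h6]
        rw [h5] at h4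
        linarith
    -- partial sums of β are bounded
    have hβsum : Summable (fun i => β (i + N)) := by
      apply summable_of_sum_range_le (c := (S N + ∑' i, c i) / (L / 2))
      · intro n; exact hβ0 _
      · intro n
        have h1 := key n
        have h2 : ∑ i ∈ Finset.range n, c (i + N) ≤ ∑' i, c (i + N) :=
          Summable.sum_le_tsum _ (fun i _ => hc _) (hRsum N)
        have h3 : ∑' i, c (i + N) ≤ ∑' i, c i := by
          have := hReq N
          have h4 : 0 ≤ ∑ i ∈ Finset.range N, c i :=
            Finset.sum_nonneg (fun i _ => hc i)
          simp only [hRdef] at this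
          linarith
        have h5 : (∑ i ∈ Finset.range n, β (i + N)) * (L / 2) ≤ S N + ∑' i, c i := by
          rw [Finset.sum_mul]
          have := hS (N + n)
          calc ∑ i ∈ Finset.range n, β (i + N) * (L / 2)
              ≤ S N - S (N + n) + ∑ i ∈ Finset.range n, c (i + N) := h1
            _ ≤ S N + ∑' i, c i := by linarith
        rw [le_div_iff₀ (by linarith : (0:ℝ) < L / 2)]
        exact h5
    exact hβd ((summable_nat_add_iff N).1 hβsum)

theorem weighted_average_rate
    (X α w Y : ℕ → ℝ)
    (hX : ∀ t, 0 ≤ X t)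
    (hαpos : ∀ t, 1 ≤ t → 0 < α t)
    (hαdec : ∀ t, 1 ≤ t → α (t + 1) ≤ α t)
    (hsum : Summable (fun t => α t * X t))
    (hdiv : ¬ Summable (fun t : ℕ => α (t + 2) / ∑ i ∈ Finset.Icc 1 (t + 1), α i))
    (hw : ∀ t, 1 ≤ t → w t = 2 * α t / ∑ i ∈ Finset.Icc 1 t, α i)
    (hY1 : Y 1 = X 1)
    (hYrec : ∀ t, 1 ≤ t → Y (t + 1) = (1 - w t) * Y t + w t * X t) :
    Tendsto (fun t : ℕ => Y t * ∑ i ∈ Finset.Icc 1 (t - 1), α i) atTop (nhds 0) := by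
  set A : ℕ → ℝ := fun t => ∑ i ∈ Finset.Icc 1 t, α i with hAdef
  have hApos : ∀ t, 1 ≤ t → 0 < A t := by
    intro t ht
    apply Finset.sum_pos
    · intro i hi
      exact hαpos i (Finset.mem_Icc.1 hi).1
    · exact Finset.nonempty_Icc.2 ht
  have hAsucc : ∀ t : ℕ, A (t + 1) = A t + α (t + 1) := by
    intro t
    exact Finset.sum_Icc_succ_top (Nat.le_add_left 1 t) α
  have hαanti : ∀ s t : ℕ, 1 ≤ s → s ≤ t → α t ≤ α s := by
    intro s t hs hst
    induction t, hst using Nat.le_induction with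
    | base => exact le_rfl
    | succ n hn ih => exact (hαdec n (hs.trans hn)).trans ih
  have hα1leA : ∀ n : ℕ, α 1 ≤ A (n + 1) := by
    intro n
    apply Finset.single_le_sum (f := α) (fun i hi => (hαpos i (Finset.mem_Icc.1 hi).1).le)
    exact Finset.mem_Icc.2 ⟨le_rfl, Nat.le_add_left 1 n⟩
  have hαleA : ∀ n : ℕ, α (n + 2) ≤ A (n + 1) :=
    fun n => (hαanti 1 (n + 2) le_rfl (by omega)).trans (hα1leA n)
  -- Y nonneg
  have hYnn : ∀ t, 1 ≤ t → 0 ≤ Y t := by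
    intro t ht
    induction t, ht using Nat.le_induction with
    | base => rw [hY1]; exact hX 1
    | succ n hn ih =>
      rw [hYrec n hn]
      match n, hn, ih with
      | 1, _, ih =>
        have : (1 - w 1) * Y 1 + w 1 * X 1 = X 1 := by rw [hY1]; ring
        rw [this]; exact hX 1
      | (m + 2), _, ih =>
        have hA := hApos (m + 2) (by omega)
        have hw2 := hw (m + 2) (by omega)
        have hwnn : 0 ≤ w (m + 2) := by
          rw [hw2]
          exact div_nonneg (by linarith [hαpos (m + 2) (by omega)]) hA.le
        have hwle : w (m + 2) ≤ 1 := by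
          rw [hw2, div_le_one hA]
          have h1 := hαleA m
          have h2 := hAsucc (m + 1)
          linarith
        exact add_nonneg (mul_nonneg (by linarith) ih) (mul_nonneg hwnn (hX _))
  -- set up the recurrence
  set S : ℕ → ℝ := fun n => Y (n + 2) * A (n + 1) with hSdef
  set β : ℕ → ℝ := fun n => α (n + 2) / A (n + 1) with hβdef
  set c : ℕ → ℝ := fun n => 2 * (α (n + 2) * X (n + 2)) with hcdef
  have hrec : ∀ n, S (n + 1) ≤ (1 - β n) * S n + c n := by
    intro n
    have hA1 : 0 < A (n + 1) := hApos _ (by omega)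
    have hA2 : 0 < A (n + 2) := hApos _ (by omega)
    have hstep : A (n + 2) = A (n + 1) + α (n + 2) := hAsucc (n + 1)
    have hwval := hw (n + 2) (by omega)
    have hYval := hYrec (n + 2) (by omega)
    have : S (n + 1) = (1 - β n) * S n + c n := by
      show Y (n + 3) * A (n + 2) = (1 - α (n + 2) / A (n + 1)) * (Y (n + 2) * A (n + 1))
        + 2 * (α (n + 2) * X (n + 2))
      have h3 : n + 3 = n + 2 + 1 := by omega
      rw [h3, hYval, hwval]
      rw [show (∑ i ∈ Finset.Icc 1 (n + 2), α i) = A (n + 2) from rfl, hstep]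
      have hne1 : A (n + 1) ≠ 0 := hA1.ne'
      have hne2 : A (n + 1) + α (n + 2) ≠ 0 := by rw [← hstep]; exact hA2.ne'
      field_simp
      ring
    linarith [this.le]
  have hSnn : ∀ n, 0 ≤ S n :=
    fun n => mul_nonneg (hYnn (n + 2) (by omega)) (hApos (n + 1) (by omega)).le
  have hβnn : ∀ n, 0 ≤ β n :=
    fun n => div_nonneg (hαpos (n + 2) (by omega)).le (hApos (n + 1) (by omega)).le
  have hcnn : ∀ n, 0 ≤ c n :=
    fun n => mul_nonneg (by norm_num) (mul_nonneg (hαpos (n + 2) (by omega)).le (hX _))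
  have hcs : Summable c := by
    have : Summable (fun n => α (n + 2) * X (n + 2)) := (summable_nat_add_iff 2).2 hsum
    exact this.mul_left 2
  have hβd : ¬ Summable β := hdiv
  have hmain : Tendsto S atTop (nhds 0) :=
    aux_tendsto_zero S β c hSnn hβnn hcnn hrec hcs hβd
  rw [← Filter.tendsto_add_atTop_iff_nat 2]
  have hfun : (fun n : ℕ => Y (n + 2) * ∑ i ∈ Finset.Icc 1 (n + 2 - 1), α i) = S := by
    funext n
    have : n + 2 - 1 = n + 1 := by omega
    rw [this]
  exact hfun ▸ hmain
end

section
/- Let {X_t} be a sequence of nonnegative reals and {α_t} a decreasing sequence of positive reals with ∑_{t} α_t·X_t < ∞ and ∑_{t} α_t / (∑_{i=1}^{t-1} α_i) = ∞. Then (min_{1 ≤ i ≤ t} X_i)·(∑_{i=1}^{t-1} α_i) → 0 as t → ∞; that is, min_{1≤i≤t} X_i = o(1/∑_{i=1}^{t-1} α_i). -/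
open Filter Finset

theorem best_iterate_rate
    (X α : ℕ → ℝ)
    (hX : ∀ t, 0 ≤ X t)
    (hαpos : ∀ t, 1 ≤ t → 0 < α t)
    (hαdec : ∀ t, 1 ≤ t → α (t + 1) ≤ α t)
    (hsum : Summable (fun t => α t * X t))
    (hdiv : ¬ Summable (fun t : ℕ => α (t + 2) / ∑ i ∈ Finset.Icc 1 (t + 1), α i)) :
    Tendsto
      (fun t : ℕ =>
        ((Finset.Icc 1 (t + 1)).inf' (Finset.nonempty_Icc.mpr (by omega)) X) *
          ∑ i ∈ Finset.Icc 1 t, α i)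
      atTop (nhds 0) := by
  set S : ℕ → ℝ := fun t => ∑ i ∈ Finset.Icc 1 t, α i with hSdef
  have hstep : ∀ n, S (n + 1) = S n + α (n + 1) := by
    intro n
    simp only [hSdef]
    rw [Finset.sum_Icc_succ_top (by omega)]
  have hSmono : Monotone S := by
    apply monotone_nat_of_le_succ
    intro n
    rw [hstep n]
    have := (hαpos (n + 1) (by omega)).le
    linarith
  have hSnonneg : ∀ t, 0 ≤ S t := by
    intro t
    apply Finset.sum_nonneg
    intro i hi
    exact (hαpos i (Finset.mem_Icc.mp hi).1).le
  have hS1 : S 1 = α 1 := by simp [hSdef]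
  have h1 : 0 < α 1 := hαpos 1 le_rfl
  have hSge : ∀ t, α 1 ≤ S (t + 1) := by
    intro t
    calc α 1 = S 1 := hS1.symm
    _ ≤ S (t + 1) := hSmono (by omega)
  have hrange : ∀ n, ∑ i ∈ Finset.range n, α (i + 1) = S n := by
    intro n
    induction n with
    | zero => simp [hSdef]
    | succ n ih => rw [Finset.sum_range_succ, ih, hstep]
  have hStop : Tendsto S atTop atTop := by
    apply tendsto_atTop_atTop_of_monotone hSmono
    by_contra h
    push_neg at h
    obtain ⟨b, hb⟩ := h
    have hsum' : Summable (fun i => α (i + 1)) := by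
      apply summable_of_sum_range_le (fun i => (hαpos (i + 1) (by omega)).le)
      intro n
      rw [hrange]
      exact (hb n).le
    have hsum2 : Summable (fun t : ℕ => α (t + 2)) := by
      have := (summable_nat_add_iff 1).mpr hsum'
      simpa using this
    apply hdiv
    apply Summable.of_nonneg_of_le
    · intro t
      exact div_nonneg (hαpos _ (by omega)).le (hSnonneg _)
    · intro t
      exact div_le_div_of_nonneg_left (hαpos _ (by omega)).le h1 (hSge t)
    · exact hsum2.div_const (α 1)
  rw [NormedAddCommGroup.tendsto_nhds_zero]
  intro ε hε
  obtain ⟨s, hs⟩ := hsum.vanishing (Metric.ball_mem_nhds 0 (by linarith : (0:ℝ) < ε / 2))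
  set T : ℕ := s.sup id with hTdef
  have hev1 : ∀ᶠ t in atTop, 2 * S T ≤ S t := hStop.eventually_ge_atTop (2 * S T)
  filter_upwards [hev1, eventually_ge_atTop T] with t hSt hTt
  set M : ℝ := (Finset.Icc 1 (t + 1)).inf' (Finset.nonempty_Icc.mpr (by omega)) X with hMdef
  have hMnonneg : 0 ≤ M := by
    apply Finset.le_inf'
    intro i _
    exact hX i
  have hdisj : Disjoint (Finset.Icc (T + 1) (t + 1)) s := by
    rw [Finset.disjoint_left]
    intro i hi his
    have h1 : T + 1 ≤ i := (Finset.mem_Icc.mp hi).1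
    have h2 : i ≤ T := Finset.le_sup (f := id) his
    omega
  have hsplit : S T + ∑ i ∈ Finset.Icc (T + 1) (t + 1), α i = S (t + 1) := by
    have e1 : ∀ n, Finset.Icc 1 n = Finset.Ioc 0 n := by
      intro n; rw [← Finset.Icc_add_one_left_eq_Ioc]; rfl
    have e2 : Finset.Icc (T + 1) (t + 1) = Finset.Ioc T (t + 1) := by
      rw [← Finset.Icc_add_one_left_eq_Ioc]
    simp only [hSdef, e1, e2]
    exact Finset.sum_Ioc_consecutive α (Nat.zero_le T) (by omega)
  have hkey : M * (S (t + 1) - S T) < ε / 2 := by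
    have h1 : M * (S (t + 1) - S T) = ∑ i ∈ Finset.Icc (T + 1) (t + 1), M * α i := by
      rw [← Finset.mul_sum]
      congr 1
      linarith [hsplit]
    have h2 : ∑ i ∈ Finset.Icc (T + 1) (t + 1), M * α i
        ≤ ∑ i ∈ Finset.Icc (T + 1) (t + 1), α i * X i := by
      apply Finset.sum_le_sum
      intro i hi
      have hmem : i ∈ Finset.Icc 1 (t + 1) := by
        have := Finset.mem_Icc.mp hi
        exact Finset.mem_Icc.mpr ⟨by omega, this.2⟩
      have hMX : M ≤ X i := Finset.inf'_le X hmem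
      have hα : 0 ≤ α i := (hαpos i (by have := Finset.mem_Icc.mp hi; omega)).le
      calc M * α i ≤ X i * α i := by nlinarith
      _ = α i * X i := by ring
    have h3 := hs _ hdisj
    rw [Metric.mem_ball, dist_zero_right, Real.norm_eq_abs] at h3
    calc M * (S (t + 1) - S T) ≤ ∑ i ∈ Finset.Icc (T + 1) (t + 1), α i * X i := by
          rw [h1]; exact h2
    _ ≤ |∑ i ∈ Finset.Icc (T + 1) (t + 1), α i * X i| := le_abs_self _
    _ < ε / 2 := h3
  have hSt1 : S t ≤ S (t + 1) := hSmono (by omega)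
  have hhalf : S t / 2 ≤ S (t + 1) - S T := by linarith
  rw [Real.norm_eq_abs, abs_of_nonneg (mul_nonneg hMnonneg (hSnonneg t))]
  nlinarith [mul_le_mul_of_nonneg_left hhalf hMnonneg]
end

section
/- Let {b_t} and {α_t} be nonnegative real sequences and {w_t} a sequence of vectors in ℝ^d. Suppose ∑_t α_t·b_t^p < ∞ and ∑_t α_t = ∞ for some p ≥ 1, and suppose there is L > 0 such that for all t and τ ≥ 1, |b_{t+τ} − b_t| ≤ L·(∑_{i=t}^{t+τ−1} α_i·b_i + ‖∑_{i=t}^{t+τ−1} α_i·w_i‖), where the series ∑_t α_t·w_t converges. Then b_t → 0. -/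
open Filter Finset

theorem orabona_lemma
    {d : ℕ} (b α : ℕ → ℝ) (w : ℕ → EuclideanSpace ℝ (Fin d)) (p L : ℝ)
    (hb : ∀ t, 0 ≤ b t) (hα : ∀ t, 0 ≤ α t) (hp : 1 ≤ p) (hL : 0 < L)
    (hsum : Summable (fun t => α t * b t ^ p))
    (hdiv : ¬ Summable α)
    (hosc : ∀ t τ : ℕ, 1 ≤ τ →
      |b (t + τ) - b t| ≤
        L * ((∑ i ∈ Finset.Ico t (t + τ), α i * b i) +
          ‖∑ i ∈ Finset.Ico t (t + τ), α i • w i‖))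
    (hconv : ∃ s : EuclideanSpace ℝ (Fin d),
      Tendsto (fun n : ℕ => ∑ i ∈ Finset.range n, α i • w i) atTop (nhds s)) :
    Tendsto b atTop (nhds 0) := by
  classical
  by_contra hnot
  rw [Metric.tendsto_atTop] at hnot
  push_neg at hnot
  obtain ⟨ε, hε, hfreq⟩ := hnot
  have hfreq' : ∀ N, ∃ n, N ≤ n ∧ ε ≤ b n := by
    intro N
    obtain ⟨n, hn, h⟩ := hfreq N
    refine ⟨n, hn, ?_⟩
    rwa [Real.dist_eq, sub_zero, abs_of_nonneg (hb n)] at h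
  -- b is ≤ ε/2 infinitely often
  have hsmall : ∀ N, ∃ n, N ≤ n ∧ b n ≤ ε / 2 := by
    intro N
    by_contra h
    push_neg at h
    apply hdiv
    rw [← summable_nat_add_iff N]
    have hshift : Summable (fun n => α (n + N) * b (n + N) ^ p) :=
      (summable_nat_add_iff N).mpr hsum
    have hc : (0:ℝ) < (ε/2) ^ p := Real.rpow_pos_of_pos (by linarith) p
    have hS := hshift.mul_right ((ε/2)^p)⁻¹
    refine Summable.of_nonneg_of_le (fun n => hα _) ?_ hS
    intro n
    have hbn : ε/2 ≤ b (n + N) := (h (n+N) (Nat.le_add_left _ _)).le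
    have hpow : (ε/2)^p ≤ b (n+N) ^ p :=
      Real.rpow_le_rpow (by linarith) hbn (by linarith)
    calc α (n+N) = α (n+N) * ((ε/2)^p * ((ε/2)^p)⁻¹) := by
          rw [mul_inv_cancel₀ hc.ne', mul_one]
      _ ≤ α (n+N) * (b (n+N)^p * ((ε/2)^p)⁻¹) := by
          refine mul_le_mul_of_nonneg_left ?_ (hα _)
          exact mul_le_mul_of_nonneg_right hpow (inv_nonneg.mpr hc.le)
      _ = α (n+N) * b (n+N)^p * ((ε/2)^p)⁻¹ := by ring
  set k := (ε/2) ^ (p - 1) with hk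
  have hkpos : 0 < k := Real.rpow_pos_of_pos (by linarith) _
  obtain ⟨s, hs⟩ := hconv
  set δ := k * (ε / (8 * L)) with hδ
  have hδpos : 0 < δ := by positivity
  have hl := hsum.hasSum.tendsto_sum_nat
  rw [Metric.tendsto_atTop] at hl hs
  obtain ⟨N1, hN1⟩ := hl (δ/2) (by positivity)
  obtain ⟨N2, hN2⟩ := hs (ε/(16*L)) (by positivity)
  obtain ⟨u, hu, hbu⟩ := hfreq' (max N1 N2)
  have hN1u : N1 ≤ u := le_trans (le_max_left _ _) hu
  have hN2u : N2 ≤ u := le_trans (le_max_right _ _) hu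
  have H : ∃ n, u + 1 ≤ n ∧ b n ≤ ε / 2 := hsmall (u+1)
  set v := Nat.find H with hv
  obtain ⟨hv1, hv2⟩ : u + 1 ≤ v ∧ b v ≤ ε / 2 := Nat.find_spec H
  have hband : ∀ i ∈ Finset.Ico u v, ε/2 ≤ b i := by
    intro i hi
    rw [Finset.mem_Ico] at hi
    rcases eq_or_lt_of_le hi.1 with h | h
    · rw [← h]; linarith
    · have hm := Nat.find_min H hi.2
      push_neg at hm
      exact (hm (by omega)).le
  have huv : u ≤ v := by omega
  -- scalar tail bound
  have hP : ∑ i ∈ Finset.Ico u v, α i * b i ^ p < δ := by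
    rw [Finset.sum_Ico_eq_sub _ huv]
    have h1 := hN1 u hN1u
    have h2 := hN1 v (by omega)
    rw [Real.dist_eq] at h1 h2
    rw [abs_lt] at h1 h2
    linarith [h1.1, h1.2, h2.1, h2.2]
  -- vector tail bound
  have hW : ‖∑ i ∈ Finset.Ico u v, α i • w i‖ ≤ ε/(8*L) := by
    rw [Finset.sum_Ico_eq_sub _ huv]
    have h1 := hN2 u hN2u
    have h2 := hN2 v (by omega)
    have htri := dist_triangle (∑ i ∈ Finset.range v, α i • w i) s
      (∑ i ∈ Finset.range u, α i • w i)
    rw [dist_comm s] at htri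
    have heq : ‖(∑ i ∈ Finset.range v, α i • w i) - ∑ i ∈ Finset.range u, α i • w i‖
        = dist (∑ i ∈ Finset.range v, α i • w i) (∑ i ∈ Finset.range u, α i • w i) := by
      rw [dist_eq_norm]
    rw [heq]
    have hhalf : ε/(16*L) + ε/(16*L) = ε/(8*L) := by ring
    linarith
  -- bound the weighted sum of b
  have hsum_b : (∑ i ∈ Finset.Ico u v, α i * b i) ≤ ε/(8*L) := by
    have step : ∀ i ∈ Finset.Ico u v, k * (α i * b i) ≤ α i * b i ^ p := by
      intro i hi
      have hbi := hband i hi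
      have hbipos : 0 < b i := lt_of_lt_of_le (by linarith) hbi
      have hrw : b i ^ p = b i * b i ^ (p-1) := by
        have h := Real.rpow_add hbipos 1 (p-1)
        rw [Real.rpow_one, show (1:ℝ) + (p-1) = p by ring] at h
        exact h
      have hk2 : k ≤ b i ^ (p-1) := Real.rpow_le_rpow (by linarith) hbi (by linarith)
      calc k * (α i * b i) = α i * (b i * k) := by ring
        _ ≤ α i * (b i * b i ^ (p-1)) := by
            refine mul_le_mul_of_nonneg_left ?_ (hα i)
            exact mul_le_mul_of_nonneg_left hk2 hbipos.le
        _ = α i * b i ^ p := by rw [hrw]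
    have hsle := Finset.sum_le_sum step
    rw [← Finset.mul_sum] at hsle
    have h2 : k * (∑ i ∈ Finset.Ico u v, α i * b i) < k * (ε/(8*L)) := by
      calc k * (∑ i ∈ Finset.Ico u v, α i * b i) ≤ ∑ i ∈ Finset.Ico u v, α i * b i ^ p := hsle
        _ < δ := hP
        _ = k * (ε/(8*L)) := hδ
    exact ((mul_lt_mul_iff_right₀ hkpos).mp h2).le
  -- final contradiction
  have hτ : 1 ≤ v - u := by omega
  have hosc' := hosc u (v - u) hτ
  rw [show u + (v - u) = v by omega] at hosc'
  have habs : b u - b v ≤ |b v - b u| := by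
    rw [abs_sub_comm]; exact le_abs_self _
  have hL8 : L * (ε/(8*L) + ε/(8*L)) = ε/4 := by field_simp; ring
  have hmul := mul_le_mul_of_nonneg_left (add_le_add hsum_b hW) hL.le
  linarith
end

section
/- Let {Y_t} be a sequence of nonnegative reals satisfying Y_{t+1} ≤ (1 + c_1·α_t²)·Y_t + c_2·α_t² for all t ≥ 1, where c_1, c_2 > 0, α_t satisfies η_1/t^{(2/3)+ε} ≤ α_t ≤ η_2/t^{(2/3)+ε} for 0 < η_1 ≤ η_2 and ε ∈ (0, 1/3), and ∑_t α_t·Y_t < ∞. Then the sequence t^{(1/3)−ε}·Y_t converges; in particular Y_t = O(1/t^{(1/3)−ε}). -/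
open Filter

lemma rs_det (Z a b : ℕ → ℝ) (hZ : ∀ n, 0 ≤ Z n) (ha : ∀ n, 0 ≤ a n) (hb : ∀ n, 0 ≤ b n)
    (haS : Summable a) (hbS : Summable b)
    (hrec : ∀ n, Z (n + 1) ≤ (1 + a n) * Z n + b n) :
    (∃ l, Tendsto Z atTop (nhds l)) ∧
      ∀ n, Z n ≤ Real.exp (∑' k, a k) * (Z 0 + ∑' k, b k) := by
  set P : ℕ → ℝ := fun n => ∏ k ∈ Finset.range n, (1 + a k) with hPdef
  have hPsucc : ∀ n, P (n + 1) = P n * (1 + a n) := fun n => Finset.prod_range_succ _ n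
  have hP1 : ∀ n, 1 ≤ P n := by
    intro n
    induction n with
    | zero => simp [hPdef]
    | succ m ih => rw [hPsucc]; nlinarith [ha m]
  have hPpos : ∀ n, 0 < P n := fun n => lt_of_lt_of_le one_pos (hP1 n)
  have hPle : ∀ n, P n ≤ Real.exp (∑' k, a k) := by
    intro n
    calc P n ≤ ∏ k ∈ Finset.range n, Real.exp (a k) :=
          Finset.prod_le_prod (fun k _ => by linarith [ha k])
            (fun k _ => by linarith [Real.add_one_le_exp (a k)])
      _ = Real.exp (∑ k ∈ Finset.range n, a k) := (Real.exp_sum _ _).symm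
      _ ≤ Real.exp (∑' k, a k) :=
          Real.exp_le_exp.mpr (Summable.sum_le_tsum _ (fun k _ => ha k) haS)
  set S : ℕ → ℝ := fun n => ∑ k ∈ Finset.range n, b k with hSdef
  have hSle : ∀ n, S n ≤ ∑' k, b k := fun n => Summable.sum_le_tsum _ (fun k _ => hb k) hbS
  have hS0 : ∀ n, 0 ≤ S n := fun n => Finset.sum_nonneg fun k _ => hb k
  set W : ℕ → ℝ := fun n => Z n / P n - S n with hWdef
  have hWanti : Antitone W := by
    apply antitone_nat_of_succ_le
    intro n
    have hden : 0 < P n * (1 + a n) := mul_pos (hPpos n) (by linarith [ha n])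
    have h1 : Z (n + 1) / P (n + 1) ≤ Z n / P n + b n := by
      rw [hPsucc n]
      calc Z (n + 1) / (P n * (1 + a n)) ≤ ((1 + a n) * Z n + b n) / (P n * (1 + a n)) :=
            div_le_div_of_nonneg_right (hrec n) hden.le |>.trans_eq rfl
        _ = Z n / P n + b n / (P n * (1 + a n)) := by
            rw [add_div, mul_comm (P n) (1 + a n),
              mul_div_mul_left _ _ (ne_of_gt (by linarith [ha n] : (0:ℝ) < 1 + a n))]
        _ ≤ Z n / P n + b n := by
            have : b n / (P n * (1 + a n)) ≤ b n :=
              div_le_self (hb n) (by nlinarith [hP1 n, ha n])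
            linarith
    have hSsucc : S (n + 1) = S n + b n := Finset.sum_range_succ _ n
    simp only [hWdef]
    rw [hSsucc]
    linarith
  have hWbdd : BddBelow (Set.range W) := by
    refine ⟨-(∑' k, b k), ?_⟩
    rintro x ⟨n, rfl⟩
    have : 0 ≤ Z n / P n := div_nonneg (hZ n) (hPpos n).le
    simp only [hWdef]
    linarith [hSle n]
  have hWlim : Tendsto W atTop (nhds (⨅ n, W n)) := tendsto_atTop_ciInf hWanti hWbdd
  have hPmono : Monotone P := monotone_nat_of_le_succ fun n => by
    rw [hPsucc n]; nlinarith [hPpos n, ha n]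
  have hPbdd : BddAbove (Set.range P) := ⟨Real.exp (∑' k, a k), by rintro x ⟨n, rfl⟩; exact hPle n⟩
  have hPlim : Tendsto P atTop (nhds (⨆ n, P n)) := tendsto_atTop_ciSup hPmono hPbdd
  have hSlim : Tendsto S atTop (nhds (∑' k, b k)) := hbS.hasSum.tendsto_sum_nat
  have hZeq : ∀ n, Z n = P n * (W n + S n) := by
    intro n
    simp only [hWdef]
    rw [sub_add_cancel, mul_comm, div_mul_cancel₀ _ (hPpos n).ne']
  constructor
  · refine ⟨(⨆ n, P n) * ((⨅ n, W n) + ∑' k, b k), ?_⟩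
    have : Tendsto (fun n => P n * (W n + S n)) atTop
        (nhds ((⨆ n, P n) * ((⨅ n, W n) + ∑' k, b k))) := hPlim.mul (hWlim.add hSlim)
    exact this.congr fun n => (hZeq n).symm
  · intro n
    have hW0 : W n ≤ W 0 := hWanti (Nat.zero_le n)
    have hW0eq : W 0 = Z 0 := by simp [hWdef, hPdef, hSdef]
    have h2 : W n + S n ≤ Z 0 + ∑' k, b k := by
      have := hSle n; rw [hW0eq] at hW0; linarith
    have h3 : 0 ≤ Z 0 + ∑' k, b k := by
      have : (0:ℝ) ≤ ∑' k, b k := tsum_nonneg hb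
      linarith [hZ 0]
    calc Z n = P n * (W n + S n) := hZeq n
      _ ≤ P n * (Z 0 + ∑' k, b k) := by
          apply mul_le_mul_of_nonneg_left h2 (hPpos n).le
      _ ≤ Real.exp (∑' k, a k) * (Z 0 + ∑' k, b k) :=
          mul_le_mul_of_nonneg_right (hPle n) h3

set_option maxHeartbeats 1000000 in
theorem convex_rate_lemma
    (Y α : ℕ → ℝ) (c₁ c₂ η₁ η₂ ε : ℝ)
    (hY : ∀ t, 0 ≤ Y t) (hc₁ : 0 < c₁) (hc₂ : 0 < c₂)
    (hη₁ : 0 < η₁) (hη₁₂ : η₁ ≤ η₂)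
    (hε0 : 0 < ε) (hε1 : ε < 1 / 3)
    (hαlb : ∀ t : ℕ, 1 ≤ t → η₁ / (t : ℝ) ^ ((2 : ℝ) / 3 + ε) ≤ α t)
    (hαub : ∀ t : ℕ, 1 ≤ t → α t ≤ η₂ / (t : ℝ) ^ ((2 : ℝ) / 3 + ε))
    (hrec : ∀ t : ℕ, 1 ≤ t → Y (t + 1) ≤ (1 + c₁ * (α t) ^ 2) * Y t + c₂ * (α t) ^ 2)
    (hsum : Summable (fun t => α t * Y t)) :
    (∃ l : ℝ, Tendsto (fun t : ℕ => (t : ℝ) ^ ((1 : ℝ) / 3 - ε) * Y t) atTop (nhds l)) ∧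
      ∃ C : ℝ, 0 < C ∧ ∀ t : ℕ, 1 ≤ t → Y t ≤ C / (t : ℝ) ^ ((1 : ℝ) / 3 - ε) := by
  set p : ℝ := (1 : ℝ) / 3 - ε with hpdef
  set q : ℝ := (2 : ℝ) / 3 + ε with hqdef
  have hη₂ : 0 < η₂ := lt_of_lt_of_le hη₁ hη₁₂
  have hp0 : 0 < p := by rw [hpdef]; linarith
  have hp1 : p ≤ 1 := by rw [hpdef]; linarith
  have hq0 : 0 < q := by rw [hqdef]; linarith
  have hpq : p - 1 = -q := by rw [hpdef, hqdef]; ring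
  -- basic facts about α for t = n+1
  have hcast : ∀ n : ℕ, (0:ℝ) < (n : ℝ) + 1 := fun n => by positivity
  have hone : ∀ n : ℕ, (1:ℝ) ≤ (n : ℝ) + 1 := fun n => by
    have : (0:ℝ) ≤ (n:ℝ) := Nat.cast_nonneg n
    linarith
  have hcastq : ∀ n : ℕ, (0:ℝ) < ((n : ℝ) + 1) ^ q := fun n => Real.rpow_pos_of_pos (hcast n) q
  have hcasteq : ∀ n : ℕ, ((n + 1 : ℕ) : ℝ) = (n : ℝ) + 1 := fun n => by push_cast; ring
  have hαlb' : ∀ n : ℕ, η₁ / ((n : ℝ) + 1) ^ q ≤ α (n + 1) := fun n => by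
    have := hαlb (n + 1) (Nat.le_add_left 1 n)
    rwa [hcasteq n] at this
  have hαub' : ∀ n : ℕ, α (n + 1) ≤ η₂ / ((n : ℝ) + 1) ^ q := fun n => by
    have := hαub (n + 1) (Nat.le_add_left 1 n)
    rwa [hcasteq n] at this
  have hαpos : ∀ n : ℕ, 0 < α (n + 1) := fun n =>
    lt_of_lt_of_le (div_pos hη₁ (hcastq n)) (hαlb' n)
  have honeq : ∀ n : ℕ, (1:ℝ) ≤ ((n : ℝ) + 1) ^ q := fun n =>
    Real.one_le_rpow (hone n) hq0.le
  have hαleη₂ : ∀ n : ℕ, α (n + 1) ≤ η₂ := fun n =>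
    (hαub' n).trans (div_le_self hη₂.le (honeq n))
  have hαsq : ∀ n : ℕ, α (n + 1) ^ 2 ≤ η₂ ^ 2 := fun n => by
    nlinarith [hαpos n, hαleη₂ n]
  -- shifted sequences
  set Zs : ℕ → ℝ := fun n => ((n : ℝ) + 1) ^ p * Y (n + 1) with hZsdef
  set as : ℕ → ℝ := fun n => c₁ * α (n + 1) ^ 2 with hasdef
  set bs : ℕ → ℝ := fun n =>
    (1 + c₁ * α (n + 1) ^ 2) * (((n : ℝ) + 2) ^ p - ((n : ℝ) + 1) ^ p) * Y (n + 1)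
      + c₂ * ((n : ℝ) + 2) ^ p * α (n + 1) ^ 2 with hbsdef
  have hZs0 : ∀ n, 0 ≤ Zs n := fun n =>
    mul_nonneg (Real.rpow_nonneg (hcast n).le p) (hY (n + 1))
  have has0 : ∀ n, 0 ≤ as n := fun n => by positivity
  have hmono : ∀ n : ℕ, ((n : ℝ) + 1) ^ p ≤ ((n : ℝ) + 2) ^ p := fun n =>
    Real.rpow_le_rpow (hcast n).le (by linarith) hp0.le
  have hbs0 : ∀ n, 0 ≤ bs n := by
    intro n
    have h1 : 0 ≤ ((n : ℝ) + 2) ^ p - ((n : ℝ) + 1) ^ p := by linarith [hmono n]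
    have h2 : 0 ≤ ((n : ℝ) + 2) ^ p := Real.rpow_nonneg (by positivity) p
    have h3 : (0:ℝ) ≤ 1 + c₁ * α (n + 1) ^ 2 := by positivity
    simp only [hbsdef]
    have := hY (n + 1)
    positivity
  -- Bernoulli bound : (n+2)^p - (n+1)^p ≤ p * (n+1)^(p-1)
  have hbern : ∀ n : ℕ, ((n : ℝ) + 2) ^ p - ((n : ℝ) + 1) ^ p ≤ p * ((n : ℝ) + 1) ^ (p - 1) := by
    intro n
    set t : ℝ := (n : ℝ) + 1 with htdef
    have ht0 : 0 < t := hcast n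
    have heq : t + 1 = t * (1 + 1 / t) := by field_simp
    have h1 : (t + 1) ^ p = t ^ p * (1 + 1 / t) ^ p := by
      rw [heq, Real.mul_rpow ht0.le (by positivity)]
    have h2 : (1 + 1 / t) ^ p ≤ 1 + p * (1 / t) :=
      rpow_one_add_le_one_add_mul_self
        (by
          have h : (0:ℝ) ≤ 1 / t := by positivity
          linarith) hp0.le hp1
    have h3 : t ^ p * (1 / t) = t ^ (p - 1) := by
      rw [Real.rpow_sub ht0 p 1, Real.rpow_one, mul_one_div]
    have h4 : (t + 1) ^ p ≤ t ^ p + p * t ^ (p - 1) := by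
      calc (t + 1) ^ p = t ^ p * (1 + 1 / t) ^ p := h1
        _ ≤ t ^ p * (1 + p * (1 / t)) := by
            apply mul_le_mul_of_nonneg_left h2 (Real.rpow_nonneg ht0.le p)
        _ = t ^ p + p * (t ^ p * (1 / t)) := by ring
        _ = t ^ p + p * t ^ (p - 1) := by rw [h3]
    have : ((n : ℝ) + 2) = t + 1 := by rw [htdef]; ring
    rw [this]
    linarith
  -- (n+1)^(p-1) ≤ α(n+1)/η₁
  have hpm1 : ∀ n : ℕ, ((n : ℝ) + 1) ^ (p - 1) ≤ α (n + 1) / η₁ := by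
    intro n
    have h1 : ((n : ℝ) + 1) ^ (p - 1) = 1 / ((n : ℝ) + 1) ^ q := by
      rw [hpq, Real.rpow_neg (hcast n).le, one_div]
    rw [h1, div_le_div_iff₀ (hcastq n) hη₁, one_mul]
    have := hαlb' n
    rw [div_le_iff₀ (hcastq n)] at this
    linarith
  -- recursion for Zs
  have hrec' : ∀ n, Zs (n + 1) ≤ (1 + as n) * Zs n + bs n := by
    intro n
    have hYrec := hrec (n + 1) (Nat.le_add_left 1 n)
    have hZseq : Zs (n + 1) = ((n : ℝ) + 2) ^ p * Y (n + 2) := by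
      simp only [hZsdef]
      push_cast
      rw [show ((n:ℝ) + 1 + 1) = (n:ℝ) + 2 by ring]
    have h2 : (0:ℝ) ≤ ((n : ℝ) + 2) ^ p := Real.rpow_nonneg (by positivity) p
    calc Zs (n + 1) = ((n : ℝ) + 2) ^ p * Y (n + 1 + 1) := hZseq
      _ ≤ ((n : ℝ) + 2) ^ p * ((1 + c₁ * α (n + 1) ^ 2) * Y (n + 1) + c₂ * α (n + 1) ^ 2) :=
          mul_le_mul_of_nonneg_left hYrec h2
      _ = (1 + as n) * Zs n + bs n := by simp only [hasdef, hZsdef, hbsdef]; ring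
  -- summability of shifted rpow
  have hrp : ∀ r : ℝ, r < -1 → Summable (fun n : ℕ => ((n : ℝ) + 1) ^ r) := by
    intro r hr
    have h1 : Summable (fun n : ℕ => (n : ℝ) ^ r) := Real.summable_nat_rpow.mpr hr
    have h2 := (summable_nat_add_iff 1).mpr h1
    refine h2.congr fun n => ?_
    rw [hcasteq n]
  -- summability of as
  have hq2 : ∀ n : ℕ, (((n : ℝ) + 1) ^ q) ^ 2 = ((n : ℝ) + 1) ^ (q * 2) := by
    intro n
    rw [← Real.rpow_natCast (((n : ℝ) + 1) ^ q) 2, ← Real.rpow_mul (hcast n).le]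
    norm_num
  have hαsqb : ∀ n : ℕ, α (n + 1) ^ 2 ≤ η₂ ^ 2 / ((n : ℝ) + 1) ^ (q * 2) := by
    intro n
    have h2' : α (n + 1) ^ 2 ≤ (η₂ / ((n : ℝ) + 1) ^ q) ^ 2 := by
      nlinarith [hαub' n, hαpos n]
    calc α (n + 1) ^ 2 ≤ (η₂ / ((n : ℝ) + 1) ^ q) ^ 2 := h2'
      _ = η₂ ^ 2 / (((n : ℝ) + 1) ^ q) ^ 2 := by rw [div_pow]
      _ = η₂ ^ 2 / ((n : ℝ) + 1) ^ (q * 2) := by rw [hq2 n]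
  have hasS : Summable as := by
    have hbound : Summable (fun n : ℕ => c₁ * η₂ ^ 2 * ((n : ℝ) + 1) ^ (-(q * 2))) := by
      refine Summable.mul_left _ (hrp _ ?_)
      rw [hqdef]; linarith
    refine Summable.of_nonneg_of_le has0 (fun n => ?_) hbound
    have h3 : ((n : ℝ) + 1) ^ (-(q * 2)) = 1 / ((n : ℝ) + 1) ^ (q * 2) := by
      rw [Real.rpow_neg (hcast n).le, one_div]
    simp only [hasdef]
    rw [h3]
    calc c₁ * α (n + 1) ^ 2 ≤ c₁ * (η₂ ^ 2 / ((n : ℝ) + 1) ^ (q * 2)) :=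
        mul_le_mul_of_nonneg_left (hαsqb n) hc₁.le
      _ = c₁ * η₂ ^ 2 * (1 / ((n : ℝ) + 1) ^ (q * 2)) := by ring
  -- summability of bs
  have hsum1 : Summable (fun n : ℕ => α (n + 1) * Y (n + 1)) := (summable_nat_add_iff 1).mpr hsum
  have hbsS : Summable bs := by
    set K₁ : ℝ := (1 + c₁ * η₂ ^ 2) * p / η₁ with hK₁
    set K₂ : ℝ := c₂ * 2 ^ p * η₂ ^ 2 with hK₂
    have hbound : Summable (fun n : ℕ =>
        K₁ * (α (n + 1) * Y (n + 1)) + K₂ * ((n : ℝ) + 1) ^ (p - 2 * q)) := by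
      refine Summable.add (hsum1.mul_left K₁) (Summable.mul_left _ (hrp _ ?_))
      rw [hpdef, hqdef]; linarith
    refine Summable.of_nonneg_of_le hbs0 (fun n => ?_) hbound
    -- term 1
    have hd := hbern n
    have hd0 : 0 ≤ ((n : ℝ) + 2) ^ p - ((n : ℝ) + 1) ^ p := by linarith [hmono n]
    have hpm := hpm1 n
    have hpm0 : (0:ℝ) ≤ ((n : ℝ) + 1) ^ (p - 1) := Real.rpow_nonneg (hcast n).le _
    have hA0 := (hαpos n).le
    have hY0 := hY (n + 1)
    have hAη := hαsq n
    have ht1 : (1 + c₁ * α (n + 1) ^ 2) * (((n : ℝ) + 2) ^ p - ((n : ℝ) + 1) ^ p) * Y (n + 1)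
        ≤ K₁ * (α (n + 1) * Y (n + 1)) := by
      have e1 : (1 + c₁ * α (n + 1) ^ 2) * (((n : ℝ) + 2) ^ p - ((n : ℝ) + 1) ^ p)
          ≤ (1 + c₁ * η₂ ^ 2) * (p * ((n : ℝ) + 1) ^ (p - 1)) := by
        have hf1 : (0:ℝ) ≤ 1 + c₁ * α (n + 1) ^ 2 := by positivity
        have hf2 : (1 + c₁ * α (n + 1) ^ 2) ≤ 1 + c₁ * η₂ ^ 2 := by nlinarith
        have hf3 : 0 ≤ p * ((n : ℝ) + 1) ^ (p - 1) := by positivity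
        nlinarith
      have e2 : (1 + c₁ * η₂ ^ 2) * (p * ((n : ℝ) + 1) ^ (p - 1)) ≤ K₁ * α (n + 1) := by
        rw [hK₁]
        rw [div_mul_eq_mul_div, le_div_iff₀ hη₁]
        have h0 : (0:ℝ) ≤ (1 + c₁ * η₂ ^ 2) * p := by positivity
        calc (1 + c₁ * η₂ ^ 2) * (p * ((n : ℝ) + 1) ^ (p - 1)) * η₁
            = ((1 + c₁ * η₂ ^ 2) * p) * (η₁ * ((n : ℝ) + 1) ^ (p - 1)) := by ring
          _ ≤ ((1 + c₁ * η₂ ^ 2) * p) * α (n + 1) :=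
              mul_le_mul_of_nonneg_left ((le_div_iff₀' hη₁).mp hpm) h0
          _ = (1 + c₁ * η₂ ^ 2) * p * α (n + 1) := by ring
      calc (1 + c₁ * α (n + 1) ^ 2) * (((n : ℝ) + 2) ^ p - ((n : ℝ) + 1) ^ p) * Y (n + 1)
          ≤ (1 + c₁ * η₂ ^ 2) * (p * ((n : ℝ) + 1) ^ (p - 1)) * Y (n + 1) :=
            mul_le_mul_of_nonneg_right e1 hY0
        _ ≤ K₁ * α (n + 1) * Y (n + 1) := mul_le_mul_of_nonneg_right e2 hY0
        _ = K₁ * (α (n + 1) * Y (n + 1)) := by ring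
    -- term 2
    have ht2 : c₂ * ((n : ℝ) + 2) ^ p * α (n + 1) ^ 2 ≤ K₂ * ((n : ℝ) + 1) ^ (p - 2 * q) := by
      have hx := hcast n
      rw [show p - 2 * q = p - q * 2 by ring]
      have h22 : ((n : ℝ) + 2) ≤ 2 * ((n : ℝ) + 1) := by
        have : (0:ℝ) ≤ (n:ℝ) := Nat.cast_nonneg n
        linarith
      have ha1 : ((n : ℝ) + 2) ^ p ≤ 2 ^ p * ((n : ℝ) + 1) ^ p := by
        calc ((n : ℝ) + 2) ^ p ≤ (2 * ((n : ℝ) + 1)) ^ p :=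
              Real.rpow_le_rpow (by positivity) h22 hp0.le
          _ = 2 ^ p * ((n : ℝ) + 1) ^ p := Real.mul_rpow (by norm_num) hx.le
      have ha2 := hαsqb n
      have hc2p : (0:ℝ) ≤ c₂ * ((n : ℝ) + 2) ^ p := by positivity
      calc c₂ * ((n : ℝ) + 2) ^ p * α (n + 1) ^ 2
          ≤ (c₂ * (2 ^ p * ((n : ℝ) + 1) ^ p)) * (η₂ ^ 2 / ((n : ℝ) + 1) ^ (q * 2)) := by
            apply mul_le_mul (mul_le_mul_of_nonneg_left ha1 hc₂.le) ha2 (by positivity)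
              (by positivity)
        _ = K₂ * (((n : ℝ) + 1) ^ p / ((n : ℝ) + 1) ^ (q * 2)) := by rw [hK₂]; ring
        _ = K₂ * ((n : ℝ) + 1) ^ (p - q * 2) := by rw [← Real.rpow_sub hx p (q * 2)]
    simp only [hbsdef]
    linarith
  -- apply the RS lemma
  obtain ⟨⟨l, hl⟩, hbd⟩ := rs_det Zs as bs hZs0 has0 hbs0 hasS hbsS hrec'
  constructor
  · refine ⟨l, ?_⟩
    rw [← tendsto_add_atTop_iff_nat 1]
    refine hl.congr fun n => ?_
    simp only [hZsdef]
    rw [hcasteq n]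
  · set C₀ : ℝ := Real.exp (∑' k, as k) * (Zs 0 + ∑' k, bs k) with hC₀
    refine ⟨C₀ + 1, ?_, ?_⟩
    · have h1 : 0 ≤ ∑' k, bs k := tsum_nonneg hbs0
      have h2 : 0 ≤ Zs 0 := hZs0 0
      have h3 : (0:ℝ) < Real.exp (∑' k, as k) := Real.exp_pos _
      nlinarith
    · intro t ht
      obtain ⟨n, rfl⟩ := Nat.exists_eq_add_of_le ht
      have hbdn := hbd n
      have htp : (0:ℝ) < ((1 + n : ℕ) : ℝ) ^ p := by
        apply Real.rpow_pos_of_pos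
        push_cast
        positivity
      rw [le_div_iff₀ htp]
      have hZn : Zs n = ((1 + n : ℕ) : ℝ) ^ p * Y (1 + n) := by
        simp only [hZsdef]
        rw [Nat.add_comm 1 n, hcasteq n]
      rw [← mul_comm (((1 + n : ℕ) : ℝ) ^ p), ← hZn]
      have h1 : 0 ≤ ∑' k, bs k := tsum_nonneg hbs0
      linarith
end
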